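/- Let K be a field, let F ∈ K[x]^{m×n} have rank r and factor as F = S·R with S ∈ K[x]^{m×r} and R ∈ K[x]^{r×n}. Let s ∈ ℤ^m and let Kb ∈ K[x]^{(m−r)×m} be an s-weak Popov basis of Ker(F), with s-pivot index set π and complement π^c. Set S₁ = S[π^c,:] ∈ K[x]^{r×r} and S₂ = S[π,:] ∈ K[x]^{(m−r)×r}. Then S₁ is nonsingular and the column submatrix Kb[:,π] ∈ K[x]^{(m−r)×(m−r)} is an s_π-weak Popov basis of the relation module Rel_{S₁}(S₂) = {p ∈ K[x]^{1×(m−r)} : p·S₂ = q·S₁ for some q}, where s_π is the subtuple of s with indices in π. -/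

import Mathlib

open Polynomial Matrix

noncomputable section

variable {K : Type*} [Field K]

/-- Degree of a univariate polynomial, viewed in `ℤ ∪ {⊥}`. -/
def pdegZ (p : K[X]) : WithBot ℤ := p.degree.map (Nat.cast : ℕ → ℤ)

/-- Shifted degree (`s`-degree) of a row vector. -/
def sdeg {n : ℕ} (s : Fin n → ℤ) (p : Fin n → K[X]) : WithBot ℤ :=
  Finset.univ.sup fun j => pdegZ (p j) + (s j : WithBot ℤ)

/-- `s`-leading matrix of `P`. -/
def leadMat {m n : ℕ} (s : Fin n → ℤ) (P : Matrix (Fin m) (Fin n) K[X]) :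
    Matrix (Fin m) (Fin n) K :=
  Matrix.of fun i j =>
    if pdegZ (P i j) + (s j : WithBot ℤ) = sdeg s (P i) then (P i j).leadingCoeff else 0

/-- `P` is `s`-reduced: its `s`-leading matrix has full row rank. -/
def IsShiftReduced {m n : ℕ} (s : Fin n → ℤ) (P : Matrix (Fin m) (Fin n) K[X]) : Prop :=
  (leadMat s P).rank = m

/-- `j` is the `s`-pivot index of the row `p`: the largest index where the `s`-degree is attained. -/
def IsPivotIndex {n : ℕ} (s : Fin n → ℤ) (p : Fin n → K[X]) (j : Fin n) : Prop :=
  pdegZ (p j) + (s j : WithBot ℤ) = sdeg s p ∧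
  ∀ j', j < j' → pdegZ (p j') + (s j' : WithBot ℤ) ≠ sdeg s p

/-- `P` is in `s`-weak Popov form: no zero row and strictly increasing `s`-pivot indices. -/
def IsWeakPopov {m n : ℕ} (s : Fin n → ℤ) (P : Matrix (Fin m) (Fin n) K[X]) : Prop :=
  (∀ i, P i ≠ 0) ∧ ∃ piv : Fin m → Fin n, StrictMono piv ∧ ∀ i, IsPivotIndex s (P i) (piv i)

/-- The rows of `Kb` form a basis of the left kernel of `F`. -/
def IsKernelBasis {ℓ m : ℕ} {β : Type*} [Fintype β]
    (Kb : Matrix (Fin ℓ) (Fin m) K[X]) (F : Matrix (Fin m) β K[X]) : Prop :=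
  (∀ i, Kb i ᵥ* F = 0) ∧
  LinearIndependent K[X] (fun i : Fin ℓ => Kb i) ∧
  ∀ p : Fin m → K[X], p ᵥ* F = 0 → ∃ u : Fin ℓ → K[X], p = u ᵥ* Kb

/-- Membership in the relation module `Rel_M(F)`. -/
def InRelModule {m n : ℕ} (M : Matrix (Fin n) (Fin n) K[X])
    (F : Matrix (Fin m) (Fin n) K[X]) (p : Fin m → K[X]) : Prop :=
  ∃ q : Fin n → K[X], p ᵥ* F = q ᵥ* M

/-- The rows of `A` form a basis of the relation module `Rel_M(F)`. -/
def IsRelationBasis {ℓ m n : ℕ} (M : Matrix (Fin n) (Fin n) K[X])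
    (A : Matrix (Fin ℓ) (Fin m) K[X]) (F : Matrix (Fin m) (Fin n) K[X]) : Prop :=
  (∀ i, InRelModule M F (A i)) ∧
  LinearIndependent K[X] (fun i : Fin ℓ => A i) ∧
  ∀ p : Fin m → K[X], InRelModule M F p → ∃ u : Fin ℓ → K[X], p = u ᵥ* A

/-- Rank of a polynomial matrix: its rank over the fraction field `K(x)`. -/
def polyRank {α β : Type*} [Fintype β] (F : Matrix α β K[X]) : ℕ :=
  (F.map (algebraMap K[X] (RatFunc K))).rank

/-- Lexicographic comparison of tuples. -/
def lexLE {r n : ℕ} (a b : Fin r → Fin n) : Prop :=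
  ∀ i, (∀ k, k < i → a k = b k) → a i ≤ b i

/-- `j` lists the column rank profile of `F`: the lexicographically smallest strictly
increasing tuple of `rank F` column indices selecting columns of full rank. -/
def IsColRankProfile {α : Type*} {n r : ℕ} (F : Matrix α (Fin n) K[X])
    (j : Fin r → Fin n) : Prop :=
  StrictMono j ∧ polyRank F = r ∧ polyRank (F.submatrix id j) = r ∧
  ∀ j' : Fin r → Fin n, StrictMono j' → polyRank (F.submatrix id j') = r → lexLE j j'


/-- The strictly increasing enumeration of the complement of a finset `J ⊆ Fin m`
having `Jᶜ.card = r`. -/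
def complEnum {m r : ℕ} (J : Finset (Fin m)) (h : Jᶜ.card = r) : Fin r → Fin m :=
  fun a => ((Jᶜ.orderIsoOfFin h) a : Fin m)

/-!
Over the fraction field `R` has full row rank, so `Ker F = Ker S`. Splitting the columns into the
pivots `π` and their complement gives `p S = p_π S₂ + p_{πᶜ} S₁`, so `p ↦ p_π` maps `Ker S` onto
`Rel_{S₁}(S₂)` (with `q = -p_{πᶜ}`), and a kernel vector vanishing on `π` comes from a left kernel
vector of `S₁`. Both the injectivity of this map and the nonsingularity of `S₁` therefore reduce to
the linear independence of the rows of `Kb[:, π]`, which is weak Popov: in a nonzero combination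
of its rows, the last row of maximal shifted degree contributes, at its pivot, a term whose degree
strictly exceeds that of every other term.
-/

lemma pdegZ_eq_bot_iff {p : K[X]} : pdegZ p = ⊥ ↔ p = 0 := by
  rw [pdegZ, WithBot.map_eq_bot_iff, degree_eq_bot]

@[simp]
lemma pdegZ_zero : pdegZ (0 : K[X]) = ⊥ :=
  pdegZ_eq_bot_iff.mpr rfl

lemma pdegZ_ne_bot {p : K[X]} (hp : p ≠ 0) : pdegZ p ≠ ⊥ :=
  pdegZ_eq_bot_iff.not.mpr hp

lemma pdegZ_lt_pdegZ_iff {p q : K[X]} : pdegZ p < pdegZ q ↔ p.degree < q.degree :=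
  Nat.strictMono_cast.withBot_map.lt_iff_lt

lemma pdegZ_mul (p q : K[X]) : pdegZ (p * q) = pdegZ p + pdegZ q := by
  rw [pdegZ, pdegZ, pdegZ, degree_mul]
  exact WithBot.map_add (Nat.castAddMonoidHom ℤ) _ _

lemma le_sdeg {n : ℕ} (s : Fin n → ℤ) (p : Fin n → K[X]) (j : Fin n) :
    pdegZ (p j) + (s j : WithBot ℤ) ≤ sdeg s p :=
  Finset.le_sup (f := fun j => pdegZ (p j) + (s j : WithBot ℤ)) (Finset.mem_univ j)

lemma sdeg_ne_bot {n : ℕ} {s : Fin n → ℤ} {p : Fin n → K[X]} (hp : p ≠ 0) : sdeg s p ≠ ⊥ := by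
  obtain ⟨j, hj⟩ := Function.ne_iff.mp hp
  exact ne_bot_of_le_ne_bot (WithBot.add_ne_bot.mpr ⟨pdegZ_ne_bot hj, WithBot.coe_ne_bot⟩)
    (le_sdeg s p j)

lemma sdeg_comp_eq {n ℓ : ℕ} {s : Fin n → ℤ} {p : Fin n → K[X]} (f : Fin ℓ → Fin n) {a : Fin ℓ}
    (ha : pdegZ (p (f a)) + (s (f a) : WithBot ℤ) = sdeg s p) :
    sdeg (s ∘ f) (p ∘ f) = sdeg s p :=
  le_antisymm (Finset.sup_le fun b _ => le_sdeg s p (f b)) (ha ▸ le_sdeg (s ∘ f) (p ∘ f) a)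

namespace IsPivotIndex

variable {n : ℕ} {s : Fin n → ℤ} {p : Fin n → K[X]} {j : Fin n}

lemma apply_ne_zero (h : IsPivotIndex s p j) (hp : p ≠ 0) : p j ≠ 0 := by
  intro h0
  apply sdeg_ne_bot (s := s) hp
  rw [← h.1, h0, pdegZ_zero, WithBot.bot_add]

lemma lt_sdeg (h : IsPivotIndex s p j) {j' : Fin n} (hj : j < j') :
    pdegZ (p j') + (s j' : WithBot ℤ) < sdeg s p :=
  (le_sdeg s p j').lt_of_ne (h.2 j' hj)

lemma comp {ℓ : ℕ} {f : Fin ℓ → Fin n} (hf : StrictMono f) {a : Fin ℓ}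
    (h : IsPivotIndex s p (f a)) : IsPivotIndex (s ∘ f) (p ∘ f) a := by
  refine ⟨(sdeg_comp_eq f h.1).symm ▸ h.1, fun b hab => ?_⟩
  rw [sdeg_comp_eq f h.1]
  exact h.2 (f b) (hf hab)

end IsPivotIndex

lemma isWeakPopov_submatrix_pivots {ℓ m : ℕ} {s : Fin m → ℤ} {P : Matrix (Fin ℓ) (Fin m) K[X]}
    {piv : Fin ℓ → Fin m} (hP : ∀ i, P i ≠ 0) (hmono : StrictMono piv)
    (hpiv : ∀ i, IsPivotIndex s (P i) (piv i)) :
    IsWeakPopov (s ∘ piv) (P.submatrix id piv) :=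
  ⟨fun i h => (hpiv i).apply_ne_zero (hP i) (congrFun h i),
    id, strictMono_id, fun i => (hpiv i).comp hmono⟩

lemma Polynomial.sum_ne_zero_of_degree_lt {R ι : Type*} [Semiring R] [Fintype ι] [DecidableEq ι]
    {f : ι → R[X]} {k : ι} (hk : f k ≠ 0) (hlt : ∀ i ≠ k, (f i).degree < (f k).degree) :
    ∑ i, f i ≠ 0 := by
  have hrest : (∑ i ∈ Finset.univ.erase k, f i).degree < (f k).degree :=
    (degree_sum_le _ _).trans_lt <| (Finset.sup_lt_iff (bot_lt_iff_ne_bot.mpr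
      (degree_ne_bot.mpr hk))).mpr fun i hi => hlt i (Finset.ne_of_mem_erase hi)
  rw [← Finset.add_sum_erase _ _ (Finset.mem_univ k)]
  intro h
  have := degree_add_eq_left_of_degree_lt hrest
  rw [h, degree_zero] at this
  exact hk (degree_eq_bot.mp this.symm)

lemma exists_vecMul_apply_pivot_ne_zero {ℓ m : ℕ} {s : Fin m → ℤ}
    {P : Matrix (Fin ℓ) (Fin m) K[X]} (hP : ∀ i, P i ≠ 0) {piv : Fin ℓ → Fin m}
    (hmono : StrictMono piv) (hpiv : ∀ i, IsPivotIndex s (P i) (piv i))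
    {u : Fin ℓ → K[X]} (hu : u ≠ 0) : ∃ i, (u ᵥ* P) (piv i) ≠ 0 := by
  obtain ⟨i₀, hi₀⟩ := Function.ne_iff.mp hu
  let d : Fin ℓ → WithBot ℤ := fun i => pdegZ (u i) + sdeg s (P i)
  -- `k` is the last of the rows of maximal degree `d`
  obtain ⟨k, -, hk⟩ :=
    Finset.univ.exists_max_image (fun i => toLex (d i, i)) ⟨i₀, Finset.mem_univ _⟩
  have hle : ∀ i, d i < d k ∨ d i = d k ∧ i ≤ k := fun i =>
    Prod.Lex.toLex_le_toLex.mp (hk i (Finset.mem_univ i))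
  have hdk : d k ≠ ⊥ :=
    ne_bot_of_le_ne_bot (WithBot.add_ne_bot.mpr ⟨pdegZ_ne_bot hi₀, sdeg_ne_bot (s := s) (hP i₀)⟩)
      ((hle i₀).elim le_of_lt fun h => h.1.le)
  have huk : u k ≠ 0 := fun h => hdk (by simp only [d, h, pdegZ_zero, WithBot.bot_add])
  have hlt : ∀ i ≠ k, (u i * P i (piv k)).degree < (u k * P k (piv k)).degree := by
    intro i hik
    rw [← pdegZ_lt_pdegZ_iff, ← WithBot.add_lt_add_iff_right (WithBot.coe_ne_bot (a := s (piv k))),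
      pdegZ_mul, pdegZ_mul, add_assoc, add_assoc, (hpiv k).1]
    rcases eq_or_ne (u i) 0 with hui | hui
    · rw [hui, pdegZ_zero, WithBot.bot_add]
      exact bot_lt_iff_ne_bot.mpr hdk
    rcases hle i with hd | ⟨hd, hik'⟩
    · exact (add_le_add le_rfl (le_sdeg s (P i) (piv k))).trans_lt hd
    · rw [show pdegZ (u k) + sdeg s (P k) = d i from hd.symm]
      exact WithBot.add_lt_add_left (pdegZ_ne_bot hui)
        ((hpiv i).lt_sdeg (hmono (lt_of_le_of_ne hik' hik)))
  exact ⟨k, Polynomial.sum_ne_zero_of_degree_lt (f := fun i => u i * P i (piv k))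
    (mul_ne_zero huk ((hpiv k).apply_ne_zero (hP k))) hlt⟩

lemma IsWeakPopov.linearIndependent {ℓ m : ℕ} {s : Fin m → ℤ} {P : Matrix (Fin ℓ) (Fin m) K[X]}
    (h : IsWeakPopov s P) : LinearIndependent K[X] fun i => P i := by
  obtain ⟨hP, piv, hmono, hpiv⟩ := h
  refine Fintype.linearIndependent_iff.mpr fun u hu => ?_
  by_contra! hu0
  obtain ⟨i, hi⟩ := exists_vecMul_apply_pivot_ne_zero hP hmono hpiv (Function.ne_iff.mpr hu0)
  rw [vecMul_eq_sum, hu] at hi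
  exact hi rfl

section BlockDecomposition

variable {R ι κ μ ν : Type*} {f : ι → μ} {g : κ → μ}

lemma vecMul_eq_add_of_bijective_sumElim [NonUnitalNonAssocSemiring R]
    [Fintype ι] [Fintype κ] [Fintype μ]
    (h : Function.Bijective (Sum.elim f g)) (w : μ → R) (S : Matrix μ ν R) :
    w ᵥ* S = (w ∘ f) ᵥ* S.submatrix f id + (w ∘ g) ᵥ* S.submatrix g id := by
  ext k
  simp only [Pi.add_apply, vecMul, dotProduct]
  rw [← (Equiv.ofBijective _ h).sum_comp, Fintype.sum_sum_type]
  rfl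

lemma exists_comp_eq_of_bijective_sumElim (h : Function.Bijective (Sum.elim f g))
    (a : ι → R) (b : κ → R) : ∃ w : μ → R, w ∘ f = a ∧ w ∘ g = b :=
  let e := Equiv.ofBijective _ h
  ⟨Sum.elim a b ∘ e.symm, funext fun i => congrArg (Sum.elim a b) (e.symm_apply_apply (.inl i)),
    funext fun i => congrArg (Sum.elim a b) (e.symm_apply_apply (.inr i))⟩

end BlockDecomposition

lemma bijective_sumElim_complEnum {ℓ m r : ℕ} {piv : Fin ℓ → Fin m}
    (hinj : Function.Injective piv) (hcard : (Finset.univ.image piv)ᶜ.card = r) :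
    Function.Bijective (Sum.elim piv (complEnum (Finset.univ.image piv) hcard)) := by
  have hpivJ : ∀ a, piv a ∈ Finset.univ.image piv := fun a =>
    Finset.mem_image_of_mem piv (Finset.mem_univ a)
  have hcJ : ∀ b, complEnum _ hcard b ∉ Finset.univ.image piv := fun b =>
    Finset.mem_compl.mp (Subtype.prop _)
  refine ⟨hinj.sumElim (Subtype.val_injective.comp (OrderIso.injective _))
    fun a b h => hcJ b (h ▸ hpivJ a), fun j => ?_⟩
  by_cases hj : j ∈ Finset.univ.image piv
  · obtain ⟨a, -, rfl⟩ := Finset.mem_image.mp hj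
    exact ⟨.inl a, rfl⟩
  · exact ⟨.inr ((Finset.orderIsoOfFin _ hcard).symm ⟨j, Finset.mem_compl.mpr hj⟩),
      Subtype.ext_iff.mp (OrderIso.apply_symm_apply _ _)⟩

lemma vecMul_injective_of_polyRank_mul {α ι β : Type*} [Fintype ι] [Fintype β]
    {S : Matrix α ι K[X]} {R : Matrix ι β K[X]} (h : polyRank (S * R) = Fintype.card ι) :
    Function.Injective R.vecMul := by
  set φ := algebraMap K[X] (RatFunc K)
  have hrank : (R.map φ).rank = Fintype.card ι := by
    refine le_antisymm (R.map φ).rank_le_card_height ?_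
    rw [← h, polyRank, Matrix.map_mul]
    exact rank_mul_le_right _ _
  have hinj : Function.Injective (R.map φ).vecMul := by
    rw [vecMul_injective_iff, linearIndependent_iff_card_eq_finrank_span, Set.finrank,
      ← rank_eq_finrank_span_row, hrank]
  intro v w hvw
  have hφ : (φ ∘ v) ᵥ* R.map φ = (φ ∘ w) ᵥ* R.map φ := funext fun j => by
    rw [← RingHom.map_vecMul, ← RingHom.map_vecMul, show v ᵥ* R = w ᵥ* R from hvw]
  exact funext fun i => IsFractionRing.injective K[X] (RatFunc K) (congrFun (hinj hφ) i)

lemma IsKernelBasis.of_mul {ℓ m : ℕ} {ι β : Type*} [Fintype ι] [Fintype β]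
    {Kb : Matrix (Fin ℓ) (Fin m) K[X]} {S : Matrix (Fin m) ι K[X]} {R : Matrix ι β K[X]}
    (hR : Function.Injective R.vecMul) (h : IsKernelBasis Kb (S * R)) : IsKernelBasis Kb S := by
  have hiff : ∀ p : Fin m → K[X], p ᵥ* (S * R) = 0 ↔ p ᵥ* S = 0 := fun p => by
    rw [← vecMul_vecMul]
    exact ⟨fun hp => hR (hp.trans (zero_vecMul R).symm), fun hp => by rw [hp, zero_vecMul]⟩
  exact ⟨fun i => (hiff _).1 (h.1 i), h.2.1, fun p hp => h.2.2 p ((hiff p).2 hp)⟩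

section RelationBasis

variable {ℓ m r : ℕ} {S : Matrix (Fin m) (Fin r) K[X]} {Kb : Matrix (Fin ℓ) (Fin m) K[X]}
  {piv : Fin ℓ → Fin m} {c : Fin r → Fin m}

theorem det_submatrix_ne_zero_of_isKernelBasis (hbij : Function.Bijective (Sum.elim piv c))
    (hkb : IsKernelBasis Kb S) (hli : LinearIndependent K[X] fun i => Kb.submatrix id piv i) :
    (S.submatrix c id).det ≠ 0 := by
  intro hdet
  obtain ⟨v, hv0, hv⟩ := exists_vecMul_eq_zero_iff.mpr hdet
  obtain ⟨w, hwpiv, hwc⟩ := exists_comp_eq_of_bijective_sumElim hbij 0 v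
  obtain ⟨u, rfl⟩ := hkb.2.2 w <| by
    rw [vecMul_eq_add_of_bijective_sumElim hbij, hwpiv, hwc, hv, zero_vecMul, add_zero]
  have hu : u = 0 := (vecMul_injective_iff.mpr hli) (hwpiv.trans (zero_vecMul _).symm)
  exact hv0 (by rw [← hwc, hu, zero_vecMul]; rfl)

theorem isRelationBasis_submatrix_of_isKernelBasis (hbij : Function.Bijective (Sum.elim piv c))
    (hkb : IsKernelBasis Kb S) (hli : LinearIndependent K[X] fun i => Kb.submatrix id piv i) :
    IsRelationBasis (S.submatrix c id) (Kb.submatrix id piv) (S.submatrix piv id) := by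
  obtain ⟨hker, -, hgen⟩ := hkb
  refine ⟨fun i => ⟨-(Kb i ∘ c), ?_⟩, hli, ?_⟩
  · have := hker i
    rw [vecMul_eq_add_of_bijective_sumElim hbij] at this
    rw [neg_vecMul, eq_neg_iff_add_eq_zero]
    exact this
  · rintro p ⟨q, hpq⟩
    obtain ⟨w, hwpiv, hwc⟩ := exists_comp_eq_of_bijective_sumElim hbij p (-q)
    obtain ⟨u, rfl⟩ := hgen w <| by
      rw [vecMul_eq_add_of_bijective_sumElim hbij, hwpiv, hwc, neg_vecMul, hpq, add_neg_cancel]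
    exact ⟨u, hwpiv.symm⟩

end RelationBasis

/-- The pivot columns of a weak Popov kernel basis form a weak Popov relation basis. -/
theorem stmt16 {K : Type*} [Field K] {m n r : ℕ}
    (F : Matrix (Fin m) (Fin n) K[X]) (hF : polyRank F = r)
    (S : Matrix (Fin m) (Fin r) K[X]) (R : Matrix (Fin r) (Fin n) K[X]) (hSR : F = S * R)
    (s : Fin m → ℤ)
    (Kb : Matrix (Fin (m - r)) (Fin m) K[X]) (hkb : IsKernelBasis Kb F)
    (piv : Fin (m - r) → Fin m) (hmono : StrictMono piv)
    (hnz : ∀ i, Kb i ≠ 0) (hpiv : ∀ i, IsPivotIndex s (Kb i) (piv i))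
    (hcard : ((Finset.univ.image piv)ᶜ).card = r) :
    (S.submatrix (complEnum (Finset.univ.image piv) hcard) id).det ≠ 0 ∧
    IsWeakPopov (s ∘ piv) (Kb.submatrix id piv) ∧
    IsRelationBasis (S.submatrix (complEnum (Finset.univ.image piv) hcard) id)
      (Kb.submatrix id piv) (S.submatrix piv id) := by
  subst hSR
  have hker : IsKernelBasis Kb S :=
    hkb.of_mul (vecMul_injective_of_polyRank_mul (by rw [hF, Fintype.card_fin]))
  have hbij := bijective_sumElim_complEnum hmono.injective hcard
  have hwp := isWeakPopov_submatrix_pivots hnz hmono hpiv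
  exact ⟨det_submatrix_ne_zero_of_isKernelBasis hbij hker hwp.linearIndependent, hwp,
    isRelationBasis_submatrix_of_isKernelBasis hbij hker hwp.linearIndependent⟩

end
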